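/- arXiv:2401.13911 — 4 statements merged into one kernel-verified Lean document; each statement's English description precedes it below -/
import Mathlib

section
/- Let n ≥ 3 and let A be an n×n complex matrix. Write A^(n-1) (resp. A^(n-2)) for its upper-left (n−1)×(n−1) (resp. (n−2)×(n−2)) submatrix, and let λ_1,…,λ_{n-1} ∈ ℂ be a listing of the eigenvalues of A^(n-1) with multiplicity, i.e. det(A^(n-1) − x·Id_{n-1}) = ∏_{l=1}^{n-1}(λ_l − x) for all x ∈ ℂ. Define the (n−1)×(n−1) matrices 𝒫 and 𝒬 by 𝒫_{jk} = (−1)^{j+k} · det of the (n−2)×(n−2) submatrix of A^(n-1) − λ_k·Id obtained by deleting row n−1 and column j, and 𝒬_{ij} = (−1)^{i+j} · det of the (n−2)×(n−2) submatrix of A^(n-1) − λ_i·Id obtained by deleting row j and column n−1. Then: (i) A^(n-1)·𝒫 = 𝒫·diag(λ_1,…,λ_{n-1}); (ii) 𝒬·A^(n-1) = diag(λ_1,…,λ_{n-1})·𝒬; (iii) 𝒬·𝒫 = D, where D is the diagonal matrix with entries D_i = −χ′(λ_i)·det(A^(n-2) − λ_i·Id_{n-2}), with χ(x) = det(A^(n-1)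 − x·Id_{n-1}) and χ′ its derivative (equivalently D_i = ∏_{l≠i}(λ_l − λ_i) · ∏_{l=1}^{n-2}(λ^(n-2)_l − λ_i), where λ^(n-2)_l are the eigenvalues of A^(n-2)). -/
open Matrix Finset

noncomputable section

/-!
The columns of `𝒫` and the rows of `𝒬` are, up to sign, the last column of `adj(B - λ_k)` and the
last row of `adj(B - λ_i)`, where `B = A^(n-1)`. Since `det(B - λ_k) = 0`, the identities
`B adj(B - λ_k) = λ_k adj(B - λ_k) = adj(B - λ_k) B` give (i) and (ii).

For (iii), the resolvent identity
`(x - y) adj(B - x) adj(B - y) = χ(y) adj(B - x) - χ(x) adj(B - y)` at `x = λ_i` gives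
`adj(B - λ_i) adj(B - y) = q_i(y) adj(B - λ_i)` with `q_i(y) = ∏_{l ≠ i} (λ_l - y)`, first for
`y ≠ λ_i` and then for all `y` by continuity. Up to sign, `(𝒬𝒫)_{ik}` is the
`(last, last)` entry of this at `y = λ_k`, namely `q_i(λ_k) det(A^(n-2) - λ_i)`: it vanishes for
`k ≠ i` (also when `λ_k = λ_i`), and `q_i(λ_i) = -χ'(λ_i)`.
-/

theorem neg_one_pow_add_eq_mul {M : Type*} [Monoid M] [HasDistribNeg M] (a b c : ℕ) :
    (-1 : M) ^ (a + b) = (-1) ^ (b + c) * (-1) ^ (c + a) := by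
  rw [← pow_add, show b + c + (c + a) = a + b + 2 * c by ring, pow_add _ (a + b), pow_mul,
    neg_one_sq, one_pow, mul_one]

theorem deriv_prod_sub_at_self {𝕜 ι : Type*} [NontriviallyNormedField 𝕜] [DecidableEq ι]
    {s : Finset ι} (lam : ι → 𝕜) {i : ι} (hi : i ∈ s) :
    deriv (fun x => ∏ l ∈ s, (lam l - x)) (lam i) = -∏ l ∈ s.erase i, (lam l - lam i) := by
  have hsplit : (fun x => ∏ l ∈ s, (lam l - x)) =
      fun x => (lam i - x) * ∏ l ∈ s.erase i, (lam l - x) :=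
    funext fun x => (mul_prod_erase s (fun l => lam l - x) hi).symm
  have hq : DifferentiableAt 𝕜 (fun x => ∏ l ∈ s.erase i, (lam l - x)) (lam i) := by
    fun_prop
  rw [hsplit, (((hasDerivAt_id' _).const_sub _).fun_mul hq.hasDerivAt).deriv, sub_self, zero_mul,
    add_zero, neg_one_mul]

namespace Matrix

section CommRing

variable {R ι : Type*} [CommRing R] [Fintype ι] [DecidableEq ι]

theorem mul_adjugate_sub_smul_one_of_det_eq_zero (B : Matrix ι ι R) {μ : R}
    (h : (B - μ • 1).det = 0) : B * adjugate (B - μ • 1) = μ • adjugate (B - μ • 1) := by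
  have := mul_adjugate (B - μ • 1)
  rw [h, zero_smul, sub_mul, sub_eq_zero, Matrix.smul_mul, one_mul] at this
  exact this

theorem adjugate_sub_smul_one_mul_of_det_eq_zero (B : Matrix ι ι R) {μ : R}
    (h : (B - μ • 1).det = 0) : adjugate (B - μ • 1) * B = μ • adjugate (B - μ • 1) := by
  have := adjugate_mul (B - μ • 1)
  rw [h, zero_smul, mul_sub, sub_eq_zero, Matrix.mul_smul, mul_one] at this
  exact this

/-- The resolvent identity for `(B - x)⁻¹`, multiplied through by `det(B - x) det(B - y)`. -/
theorem sub_smul_adjugate_mul_adjugate (B : Matrix ι ι R) (x y : R) :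
    (x - y) • (adjugate (B - x • 1) * adjugate (B - y • 1)) =
      (B - y • 1).det • adjugate (B - x • 1) - (B - x • 1).det • adjugate (B - y • 1) := by
  have hdiff : (x - y) • (1 : Matrix ι ι R) = (B - y • 1) - (B - x • 1) := by
    rw [sub_smul]; abel
  calc (x - y) • (adjugate (B - x • 1) * adjugate (B - y • 1))
      = adjugate (B - x • 1) * ((x - y) • 1) * adjugate (B - y • 1) := by
        rw [Matrix.mul_smul, mul_one, Matrix.smul_mul]
    _ = adjugate (B - x • 1) * ((B - y • 1) * adjugate (B - y • 1))
          - adjugate (B - x • 1) * (B - x • 1) * adjugate (B - y • 1) := by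
        rw [hdiff, mul_sub, sub_mul, Matrix.mul_assoc]
    _ = _ := by
        rw [mul_adjugate, adjugate_mul, Matrix.mul_smul, mul_one, Matrix.smul_mul, one_mul]

end CommRing

theorem adjugate_sub_smul_one_mul_adjugate {𝕜 ι : Type*} [NontriviallyNormedField 𝕜]
    [Fintype ι] [DecidableEq ι] (B : Matrix ι ι 𝕜) {μ : 𝕜} {q : 𝕜 → 𝕜} (hq : Continuous q)
    (hχ : ∀ y, (B - y • 1).det = (μ - y) * q y) (y : 𝕜) :
    adjugate (B - μ • 1) * adjugate (B - y • 1) = q y • adjugate (B - μ • 1) := by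
  have hB : Continuous fun y : 𝕜 => B - y • (1 : Matrix ι ι 𝕜) :=
    continuous_const.sub (continuous_id.smul continuous_const)
  -- Off `y = μ` the resolvent identity can be divided by `μ - y`; continuity covers `y = μ`.
  refine congrFun (Continuous.ext_on (dense_compl_singleton μ)
    (continuous_const.matrix_mul hB.matrix_adjugate) (hq.smul continuous_const) ?_) y
  intro y (hy : y ≠ μ)
  have hμ : (B - μ • 1).det = 0 := by rw [hχ, sub_self, zero_mul]
  apply smul_right_injective _ (sub_ne_zero.mpr hy.symm)
  simp only [sub_smul_adjugate_mul_adjugate, hμ, zero_smul, sub_zero, hχ y, mul_smul]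
  rfl

section Fin

variable {R : Type*} [CommRing R] {n : ℕ}

theorem adjugate_sub_smul_one_last_last (B : Matrix (Fin (n + 1)) (Fin (n + 1)) R) (x : R) :
    adjugate (B - x • 1) (Fin.last n) (Fin.last n) =
      (B.submatrix Fin.castSucc Fin.castSucc - x • 1).det := by
  rw [adjugate_fin_succ_eq_det_submatrix, ← two_mul, pow_mul, neg_one_sq, one_pow, one_mul,
    Fin.succAbove_last, ← submatrix_one _ (Fin.castSucc_injective n)]
  rfl

variable (B : Matrix (Fin (n + 1)) (Fin (n + 1)) R) (lam : Fin (n + 1) → R)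

/-- The matrix `𝒫` of the paper. -/
def rightEigenvectorMatrix : Matrix (Fin (n + 1)) (Fin (n + 1)) R := fun j k =>
  (-1 : R) ^ (j.val + k.val) * ((B - lam k • 1).submatrix (Fin.last n).succAbove j.succAbove).det

/-- The matrix `𝒬` of the paper. -/
def leftEigenvectorMatrix : Matrix (Fin (n + 1)) (Fin (n + 1)) R := fun i j =>
  (-1 : R) ^ (i.val + j.val) * ((B - lam i • 1).submatrix j.succAbove (Fin.last n).succAbove).det

theorem rightEigenvectorMatrix_apply (j k : Fin (n + 1)) :
    rightEigenvectorMatrix B lam j k =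
      (-1) ^ (k.val + n) * adjugate (B - lam k • 1) j (Fin.last n) := by
  rw [rightEigenvectorMatrix, adjugate_fin_succ_eq_det_submatrix, ← mul_assoc, Fin.val_last,
    ← neg_one_pow_add_eq_mul]

theorem leftEigenvectorMatrix_apply (i j : Fin (n + 1)) :
    leftEigenvectorMatrix B lam i j =
      (-1) ^ (i.val + n) * adjugate (B - lam i • 1) (Fin.last n) j := by
  rw [leftEigenvectorMatrix, adjugate_fin_succ_eq_det_submatrix, ← mul_assoc, Fin.val_last,
    add_comm j.val, ← neg_one_pow_add_eq_mul, add_comm]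

variable {B lam}

theorem mul_rightEigenvectorMatrix (h : ∀ k, (B - lam k • 1).det = 0) :
    B * rightEigenvectorMatrix B lam = rightEigenvectorMatrix B lam * diagonal lam := by
  ext j k
  have hcol := congrFun (congrFun (mul_adjugate_sub_smul_one_of_det_eq_zero B (h k)) j)
    (Fin.last n)
  simp only [mul_apply, smul_apply, smul_eq_mul] at hcol
  rw [mul_diagonal]
  simp only [mul_apply, rightEigenvectorMatrix_apply, mul_left_comm (B j _), ← Finset.mul_sum,
    hcol]
  ring

theorem leftEigenvectorMatrix_mul (h : ∀ i, (B - lam i • 1).det = 0) :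
    leftEigenvectorMatrix B lam * B = diagonal lam * leftEigenvectorMatrix B lam := by
  ext i j
  have hrow := congrFun (congrFun (adjugate_sub_smul_one_mul_of_det_eq_zero B (h i))
    (Fin.last n)) j
  simp only [mul_apply, smul_apply, smul_eq_mul] at hrow
  rw [diagonal_mul]
  simp only [mul_apply, leftEigenvectorMatrix_apply, mul_assoc, ← Finset.mul_sum, hrow]
  ring

end Fin

theorem leftEigenvectorMatrix_mul_rightEigenvectorMatrix {𝕜 : Type*} [NontriviallyNormedField 𝕜]
    {n : ℕ} {B : Matrix (Fin (n + 1)) (Fin (n + 1)) 𝕜} {lam : Fin (n + 1) → 𝕜}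
    (hlam : ∀ x, (B - x • 1).det = ∏ l, (lam l - x)) :
    leftEigenvectorMatrix B lam * rightEigenvectorMatrix B lam =
      diagonal fun i => (∏ l ∈ univ.erase i, (lam l - lam i)) *
        (B.submatrix Fin.castSucc Fin.castSucc - lam i • 1).det := by
  ext i k
  have hprod := adjugate_sub_smul_one_mul_adjugate B (μ := lam i)
    (q := fun y => ∏ l ∈ univ.erase i, (lam l - y))
    (continuous_finsetProd _ fun l _ => continuous_const.sub continuous_id)
    (fun y => (hlam y).trans (mul_prod_erase _ (fun l => lam l - y) (mem_univ i)).symm) (lam k)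
  have hentry := congrFun (congrFun hprod (Fin.last n)) (Fin.last n)
  simp only [mul_apply, smul_apply, smul_eq_mul, adjugate_sub_smul_one_last_last] at hentry
  have hsum : (leftEigenvectorMatrix B lam * rightEigenvectorMatrix B lam) i k =
      (-1) ^ (i.val + n) * (-1) ^ (k.val + n) *
        ∑ j, adjugate (B - lam i • 1) (Fin.last n) j * adjugate (B - lam k • 1) j (Fin.last n) := by
    simp only [mul_apply, leftEigenvectorMatrix_apply, rightEigenvectorMatrix_apply, mul_sum]
    exact sum_congr rfl fun j _ => by ring
  rw [hsum, hentry]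
  rcases eq_or_ne i k with rfl | hik
  · rw [diagonal_apply_eq, ← pow_add, ← two_mul, pow_mul, neg_one_sq, one_pow, one_mul]
  · rw [diagonal_apply_ne _ hik, prod_eq_zero (mem_erase.mpr ⟨hik.symm, mem_univ k⟩) (sub_self _),
      zero_mul, mul_zero]

end Matrix

/-- Properties of the matrices 𝒫, 𝒬 diagonalizing the upper-left
submatrix `A^(n-1)` of an `n × n` complex matrix `A` (here `n = m+3 ≥ 3`). -/
theorem stmt0 (m : ℕ) (A : Matrix (Fin (m+3)) (Fin (m+3)) ℂ)
    (lam : Fin (m+2) → ℂ)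
    (hlam : ∀ x : ℂ,
      (A.submatrix Fin.castSucc Fin.castSucc
        - x • (1 : Matrix (Fin (m+2)) (Fin (m+2)) ℂ)).det = ∏ l, (lam l - x)) :
    -- `B = A^(n-1)`, `B2 = A^(n-2)`
    let B : Matrix (Fin (m+2)) (Fin (m+2)) ℂ := A.submatrix Fin.castSucc Fin.castSucc
    let B2 : Matrix (Fin (m+1)) (Fin (m+1)) ℂ :=
      A.submatrix (Fin.castLE (show m+1 ≤ m+3 by omega)) (Fin.castLE (show m+1 ≤ m+3 by omega))
    -- 𝒫_{jk} = (−1)^{j+k} · minor of `B − λ_k·Id` deleting row n−1 and column j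
    let P : Matrix (Fin (m+2)) (Fin (m+2)) ℂ := fun j k =>
      (-1 : ℂ) ^ (j.val + k.val) *
        ((B - lam k • 1).submatrix (Fin.last (m+1)).succAbove j.succAbove).det
    -- 𝒬_{ij} = (−1)^{i+j} · minor of `B − λ_i·Id` deleting row j and column n−1
    let Q : Matrix (Fin (m+2)) (Fin (m+2)) ℂ := fun i j =>
      (-1 : ℂ) ^ (i.val + j.val) *
        ((B - lam i • 1).submatrix j.succAbove (Fin.last (m+1)).succAbove).det
    -- D_i = −χ′(λ_i) · det(A^(n-2) − λ_i·Id)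
    let D : Fin (m+2) → ℂ := fun i =>
      -(deriv (fun x : ℂ => (B - x • 1).det) (lam i)) * (B2 - lam i • 1).det
    B * P = P * Matrix.diagonal lam ∧
    Q * B = Matrix.diagonal lam * Q ∧
    Q * P = Matrix.diagonal D := by
  intro B B2 P Q D
  have hdet : ∀ k, (B - lam k • 1).det = 0 := fun k => by
    rw [hlam]
    exact prod_eq_zero (mem_univ k) (sub_self _)
  have hD : D = fun i => (∏ l ∈ univ.erase i, (lam l - lam i)) *
      (B.submatrix Fin.castSucc Fin.castSucc - lam i • 1).det := by
    funext i
    change -deriv (fun x => (B - x • 1).det) (lam i) * (B2 - lam i • 1).det = _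
    rw [funext hlam, deriv_prod_sub_at_self lam (mem_univ i), neg_neg]
    rfl
  exact ⟨mul_rightEigenvectorMatrix hdet, leftEigenvectorMatrix_mul hdet,
    hD ▸ leftEigenvectorMatrix_mul_rightEigenvectorMatrix hlam⟩
end
end

section
/- Let m ≥ 1, let B be an m×m complex matrix, let χ(x) = det(B − x·Id_m), and let λ ∈ ℂ be an eigenvalue of B, i.e. χ(λ) = 0. Then the square of the adjugate matrix of B − λ·Id_m satisfies adjugate(B − λ·Id_m)² = −χ′(λ) · adjugate(B − λ·Id_m), where χ′ is the derivative of the polynomial χ. -/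
/-!
Write `χ_A = X · d + χ_A(0)`, so `d = χ_A.divX`. Cayley–Hamilton gives
`A · d(A) = -χ_A(0) = ±det A`, hence `adj A = ±d(A)`: first for the generic matrix, whose determinant is a nonzero divisor, then
for every matrix by specialisation. If `det A = 0` then `X · d = χ_A`, so `d² ≡ d(0) · d` modulo
`χ_A`, i.e. `d(A)² = d(0) · d(A)`. Finally `d(0)` is the linear coefficient of `χ_A`, which for
`A = B - λ` is, up to the sign `(-1)^m`, the derivative of `x ↦ det (B - x)` at `λ`.
-/

open Matrix Polynomial

theorem Polynomial.map_divX {R S : Type*} [Semiring R] [Semiring S] (f : R →+* S) (p : R[X]) :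
    (p.map f).divX = p.divX.map f := by
  ext
  simp [coeff_divX, coeff_map]

namespace Matrix

variable {n R : Type*} [Fintype n] [DecidableEq n] [CommRing R]

theorem map_aeval {S : Type*} [CommRing S] (f : R →+* S) (A : Matrix n n R) (p : R[X]) :
    (aeval A p).map f = aeval (A.map f) (p.map f) :=
  map_aeval_eq_aeval_map (ψ := f.mapMatrix)
    (by ext; simp [algebraMap_eq_diagonal, diagonal_apply, apply_ite f]) p A

theorem charpoly_coeff_zero (A : Matrix n n R) :
    A.charpoly.coeff 0 = (-1) ^ Fintype.card n * A.det := by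
  rw [det_eq_sign_charpoly_coeff, ← mul_assoc, ← pow_add, Even.neg_one_pow ⟨_, rfl⟩, one_mul]

theorem mul_aeval_charpoly_divX (A : Matrix n n R) :
    A * aeval A A.charpoly.divX = (-(-1) ^ Fintype.card n * A.det) • (1 : Matrix n n R) := by
  have hX : X * A.charpoly.divX = A.charpoly - C (A.charpoly.coeff 0) :=
    eq_sub_of_add_eq (X_mul_divX_add _)
  calc A * aeval A A.charpoly.divX = aeval A (X * A.charpoly.divX) := by
        rw [map_mul, aeval_X]
    _ = _ := by
        rw [hX, map_sub, aeval_self_charpoly, aeval_C, charpoly_coeff_zero,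
          Algebra.algebraMap_eq_smul_one, zero_sub, ← neg_smul, neg_mul]

theorem adjugate_eq_aeval_charpoly_divX_of_isLeftRegular [Nonempty n] (A : Matrix n n R)
    (hA : IsLeftRegular A.det) :
    adjugate A = (-1 : R) ^ (Fintype.card n - 1) • aeval A A.charpoly.divX := by
  obtain ⟨k, hk⟩ := Nat.exists_eq_add_one.mpr (Fintype.card_pos (α := n))
  apply (isRegular_of_isLeftRegular_det hA).left
  have hsign : (-1) ^ k * -(-1) ^ (k + 1) = (1 : R) := by
    simp [pow_succ, ← mul_pow]
  change A * adjugate A = A * _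
  rw [mul_adjugate, Matrix.mul_smul, mul_aeval_charpoly_divX, smul_smul,
    ← mul_assoc, hk, Nat.add_sub_cancel, hsign, one_mul]

theorem adjugate_eq_aeval_charpoly_divX [Nonempty n] (A : Matrix n n R) :
    adjugate A = (-1 : R) ^ (Fintype.card n - 1) • aeval A A.charpoly.divX := by
  let φ : MvPolynomial (n × n) ℤ →+* R :=
    MvPolynomial.eval₂Hom (Int.castRingHom R) fun p => A p.1 p.2
  have hφ : (mvPolynomialX n n ℤ).map φ = A := mvPolynomialX_map_eval₂ _ A
  have generic := adjugate_eq_aeval_charpoly_divX_of_isLeftRegular (mvPolynomialX n n ℤ)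
    (IsRegular.of_ne_zero (det_mvPolynomialX_ne_zero n ℤ)).left
  calc adjugate A = (adjugate (mvPolynomialX n n ℤ)).map φ := by
        rw [← hφ]; exact (φ.map_adjugate _).symm
    _ = _ := by
        rw [generic, Matrix.map_smul' _ _ _ (map_mul φ), map_aeval, ← map_divX, ← charpoly_map,
          hφ, map_pow, map_neg, map_one]

theorem aeval_charpoly_divX_mul_self_of_det_eq_zero (A : Matrix n n R) (hA : A.det = 0) :
    aeval A A.charpoly.divX * aeval A A.charpoly.divX =
      A.charpoly.coeff 1 • aeval A A.charpoly.divX := by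
  set d := A.charpoly.divX
  have hXd : X * d = A.charpoly := by
    simpa [charpoly_coeff_zero, hA] using X_mul_divX_add A.charpoly
  have hdd : d * d = d.divX * A.charpoly + C (A.charpoly.coeff 1) * d := by
    calc d * d = (X * d.divX + C (d.coeff 0)) * d := by rw [X_mul_divX_add]
      _ = d.divX * (X * d) + C (d.coeff 0) * d := by ring
      _ = _ := by rw [hXd, coeff_divX]
  rw [← map_mul, hdd, map_add, map_mul, map_mul, aeval_self_charpoly, mul_zero, zero_add, aeval_C,
    ← Algebra.smul_def]

theorem adjugate_mul_self_of_det_eq_zero [Nonempty n] (A : Matrix n n R) (hA : A.det = 0) :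
    adjugate A * adjugate A = ((-1) ^ (Fintype.card n - 1) * A.charpoly.coeff 1) • adjugate A := by
  rw [adjugate_eq_aeval_charpoly_divX, smul_mul_smul_comm,
    aeval_charpoly_divX_mul_self_of_det_eq_zero A hA, smul_smul, smul_smul, mul_right_comm]

theorem hasDerivAt_det_sub_smul_one {𝕜 : Type*} [NontriviallyNormedField 𝕜] (B : Matrix n n 𝕜)
    (μ : 𝕜) :
    HasDerivAt (fun x => (B - x • (1 : Matrix n n 𝕜)).det)
      ((-1) ^ Fintype.card n * (B - μ • 1).charpoly.coeff 1) μ := by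
  have hdet : (fun x => (B - x • (1 : Matrix n n 𝕜)).det) =
      fun x => (-1) ^ Fintype.card n * (B - μ • 1).charpoly.eval (x - μ) := by
    funext x
    rw [eval_charpoly, ← det_neg, scalar_apply, ← smul_one_eq_diagonal, sub_smul]
    abel_nf
  have hχ := ((B - μ • 1).charpoly.hasDerivAt (μ - μ)).comp_sub_const μ μ
  rw [sub_self, ← coeff_zero_eq_eval_zero, coeff_derivative] at hχ
  simpa [hdet] using hχ.const_mul ((-1 : 𝕜) ^ Fintype.card n)

end Matrix

/-- if `λ` is an eigenvalue of the `m × m` matrix `B` (with `m = k+1 ≥ 1`)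
and `χ(x) = det(B − x·Id)`, then `adjugate(B − λ·Id)² = −χ′(λ)·adjugate(B − λ·Id)`. -/
theorem stmt1 (k : ℕ) (B : Matrix (Fin (k+1)) (Fin (k+1)) ℂ) (lam : ℂ)
    (hlam : (B - lam • (1 : Matrix (Fin (k+1)) (Fin (k+1)) ℂ)).det = 0) :
    (B - lam • 1).adjugate * (B - lam • 1).adjugate =
      (-(deriv (fun x : ℂ =>
          (B - x • (1 : Matrix (Fin (k+1)) (Fin (k+1)) ℂ)).det) lam)) •
        (B - lam • 1).adjugate := by
  rw [adjugate_mul_self_of_det_eq_zero _ hlam, (hasDerivAt_det_sub_smul_one B lam).deriv,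
    Fintype.card_fin, Nat.add_sub_cancel, pow_succ]
  congr 1
  ring
end

section
/- Let n ≥ 2, let μ_1,…,μ_{n-1}, a_1,…,a_{n-1}, b_1,…,b_{n-1} ∈ ℂ and c ∈ ℂ, and let M be the n×n arrowhead matrix with M_{ii} = μ_i for 1 ≤ i ≤ n−1, M_{in} = a_i and M_{ni} = b_i for 1 ≤ i ≤ n−1, M_{nn} = c, and all other entries zero. Then for every x ∈ ℂ, det(x·Id_n + M) = (x + c)·∏_{i=1}^{n-1}(x + μ_i) − Σ_{k=1}^{n-1} b_k·a_k·∏_{l=1, l≠k}^{n-1}(x + μ_l). -/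
/-!
Expand the determinant along the last row. The corner cofactor is the determinant of the
diagonal block. The cofactor of the entry `b k` is expanded along its last column, which
carries `a`: deleting row `i` and column `k` of a diagonal matrix leaves a zero row unless
`i = k`, so only the term `a k · ∏_{l ≠ k} d l` survives, and the two signs combine to `-1`.
-/

open Matrix Finset

noncomputable section

/-- The `(m+2) × (m+2)` arrowhead matrix with diagonal data `μ`, last column `a`,
last row `b`, and corner entry `c`. -/
def arrowhead (m : ℕ) (μ a b : Fin (m+1) → ℂ) (c : ℂ) :
    Matrix (Fin (m+2)) (Fin (m+2)) ℂ := fun i j =>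
  if hi : i = Fin.last (m+1) then
    if hj : j = Fin.last (m+1) then c else b (j.castPred hj)
  else
    if hj : j = Fin.last (m+1) then a (i.castPred hi)
    else if i = j then μ (i.castPred hi) else 0

namespace Matrix

variable {R : Type*} [CommRing R]

theorem det_diagonal_submatrix_succAbove {n : ℕ} (d : Fin (n + 1) → R) (i k : Fin (n + 1)) :
    ((diagonal d).submatrix i.succAbove k.succAbove).det =
      if i = k then ∏ l ∈ univ.erase k, d l else 0 := by
  split_ifs with hik
  · subst hik
    rw [submatrix_diagonal _ _ Fin.succAbove_right_injective, det_diagonal, ← compl_singleton,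
      ← Fin.image_succAbove_univ, prod_image fun _ _ _ _ h => Fin.succAbove_right_injective h]
    rfl
  · obtain ⟨r, hr⟩ := Fin.exists_succAbove_eq (Ne.symm hik)
    exact det_eq_zero_of_row_eq_zero r fun j => by simp [hr]

theorem det_submatrix_castSucc_succAbove_castSucc {n : ℕ}
    (N : Matrix (Fin (n + 2)) (Fin (n + 2)) R) {d : Fin (n + 1) → R}
    (hN : N.submatrix Fin.castSucc Fin.castSucc = diagonal d) (k : Fin (n + 1)) :
    (N.submatrix Fin.castSucc k.castSucc.succAbove).det =
      (-1) ^ (k + n : ℕ) * N k.castSucc (Fin.last _) * ∏ l ∈ univ.erase k, d l := by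
  have hminor (i : Fin (n + 1)) :
      (N.submatrix Fin.castSucc k.castSucc.succAbove).submatrix i.succAbove (Fin.last n).succAbove
        = (diagonal d).submatrix i.succAbove k.succAbove := by
    rw [← hN]
    ext r j
    simp
  rw [det_succ_column _ (Fin.last n), Fintype.sum_eq_single k fun i hik => by
    rw [hminor, det_diagonal_submatrix_succAbove, if_neg hik, mul_zero]]
  rw [hminor, det_diagonal_submatrix_succAbove, if_pos rfl, Fin.val_last]
  simp

theorem det_eq_of_submatrix_castSucc_eq_diagonal {n : ℕ}
    (N : Matrix (Fin (n + 2)) (Fin (n + 2)) R) {d : Fin (n + 1) → R}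
    (hN : N.submatrix Fin.castSucc Fin.castSucc = diagonal d) :
    N.det = N (Fin.last _) (Fin.last _) * ∏ i, d i
      - ∑ k, N (Fin.last _) k.castSucc * N k.castSucc (Fin.last _) * ∏ l ∈ univ.erase k, d l := by
  rw [det_succ_row _ (Fin.last _), Fin.sum_univ_castSucc, sub_eq_add_neg, ← sum_neg_distrib,
    add_comm, Fin.succAbove_last]
  congr 1
  · rw [hN, det_diagonal, Fin.val_last, ← two_mul, pow_mul, neg_one_sq, one_pow, one_mul]
  · refine sum_congr rfl fun k _ => ?_
    have hsign : (-1 : R) ^ (n + 1 + k + (k + n)) = -1 := by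
      rw [show n + 1 + k + (k + n) = 2 * (k + n) + 1 by ring, pow_succ, pow_mul]
      simp
    rw [det_submatrix_castSucc_succAbove_castSucc N hN, Fin.val_last, Fin.val_castSucc]
    linear_combination (N (Fin.last _) k.castSucc * N k.castSucc (Fin.last _)
      * ∏ l ∈ univ.erase k, d l) * hsign

end Matrix

/-- determinant expansion of `x·Id + M` for an arrowhead matrix `M`. -/
theorem stmt2 (m : ℕ) (μ a b : Fin (m+1) → ℂ) (c : ℂ) (x : ℂ) :
    (x • (1 : Matrix (Fin (m+2)) (Fin (m+2)) ℂ) + arrowhead m μ a b c).det =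
      (x + c) * ∏ i, (x + μ i)
        - ∑ k, b k * a k * ∏ l ∈ Finset.univ.erase k, (x + μ l) := by
  have hdiag : (x • (1 : Matrix (Fin (m+2)) (Fin (m+2)) ℂ) + arrowhead m μ a b c).submatrix
      Fin.castSucc Fin.castSucc = diagonal (fun i => x + μ i) := by
    ext i j
    rcases eq_or_ne i j with rfl | hij <;> simp [arrowhead, *]
  rw [det_eq_of_submatrix_castSucc_eq_diagonal _ hdiag]
  simp [arrowhead, one_apply, (Fin.castSucc_lt_last _).ne']
end
end

section
/- Let n ≥ 2 and let A be the n×n arrowhead matrix with diagonal entries λ^(n-1)_1,…,λ^(n-1)_{n-1}, last column a_1,…,a_{n-1}, last row b_1,…,b_{n-1}, and corner entry a_nn. Let λ^(n)_1,…,λ^(n)_n ∈ ℂ be a listing of the eigenvalues of A with multiplicity, i.e. det(A − x·Id_n) = ∏_{i=1}^{n}(λ^(n)_i − x) for all x. Let m be a positive integer and 1 ≤ j ≤ n, and assume m − (λ^(n)_j − λ^(n-1)_k)/(2πi) ≠ 0 for every 1 ≤ k ≤ n−1. Then ∏_{i=1}^{n}( m − (λ^(n)_j − λ^(n)_i)/(2πi)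 ) / ∏_{i=1}^{n-1}( m − (λ^(n)_j − λ^(n-1)_i)/(2πi) ) = m − λ^(n)_j/(2πi) + a_nn/(2πi) − Σ_{k=1}^{n-1} ( b_k/(2πi) ) · ( 1 / ( m − (λ^(n)_j − λ^(n-1)_k)/(2πi) ) ) · ( a_k/(2πi) ). -/
/-! Evaluate the characteristic polynomial at `t = λⱼ - 2πi M`. Expanding along the Schur
complement of the diagonal block, `det (A - t) = ∏ₖ (λ'ₖ - t) · (aₙₙ - t - ∑ₖ bₖ aₖ / (λ'ₖ - t))`,
and since `z - t = 2πi (M - (λⱼ - z) / 2πi)`, dividing each factor by `2πi` gives the identity. -/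

open Matrix Finset

noncomputable section

/-- `2πi` as a complex number. -/
def twoPiI : ℂ := 2 * (Real.pi : ℂ) * Complex.I

lemma arrowhead_sub_smul_one (m : ℕ) (μ a b : Fin (m+1) → ℂ) (c x : ℂ) :
    arrowhead m μ a b c - x • (1 : Matrix (Fin (m+2)) (Fin (m+2)) ℂ)
      = arrowhead m (fun k => μ k - x) a b (c - x) := by
  ext i j
  simp only [arrowhead, Matrix.sub_apply, Matrix.smul_apply, one_apply]
  split_ifs <;> simp_all

lemma arrowhead_eq_reindex_fromBlocks (m : ℕ) (μ a b : Fin (m+1) → ℂ) (c : ℂ) :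
    arrowhead m μ a b c =
      reindex finSumFinEquiv finSumFinEquiv
        (fromBlocks (diagonal μ) (of fun i (_ : Fin 1) => a i)
          (of fun (_ : Fin 1) j => b j) (of fun _ _ => c)) := by
  ext i j
  induction i using Fin.lastCases <;> induction j using Fin.lastCases <;>
    simp [arrowhead, diagonal_apply, Fin.castSucc_ne_last]

lemma det_arrowhead (m : ℕ) (μ a b : Fin (m+1) → ℂ) (c : ℂ) (hμ : ∀ k, μ k ≠ 0) :
    (arrowhead m μ a b c).det = (∏ k, μ k) * (c - ∑ k, b k * a k / μ k) := by
  let _ : Invertible μ := ⟨μ⁻¹, funext fun k => inv_mul_cancel₀ (hμ k),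
    funext fun k => mul_inv_cancel₀ (hμ k)⟩
  let _ := diagonalInvertible μ
  rw [arrowhead_eq_reindex_fromBlocks, det_reindex_self, det_fromBlocks₁₁, invOf_diagonal_eq,
    det_diagonal, det_unique]
  simp [mul_apply, diagonal_apply, div_eq_mul_inv, mul_right_comm, show ⅟μ = μ⁻¹ from rfl]

lemma det_arrowhead_sub_smul_one (m : ℕ) (μ a b : Fin (m+1) → ℂ) (c x : ℂ)
    (hμ : ∀ k, μ k ≠ x) :
    (arrowhead m μ a b c - x • (1 : Matrix (Fin (m+2)) (Fin (m+2)) ℂ)).det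
      = (∏ k, (μ k - x)) * (c - x - ∑ k, b k * a k / (μ k - x)) := by
  rw [arrowhead_sub_smul_one, det_arrowhead _ _ _ _ _ fun k => sub_ne_zero.2 (hμ k)]

lemma twoPiI_ne_zero : twoPiI ≠ 0 := by
  simp [twoPiI, Real.pi_ne_zero]

theorem stmt3_general (m : ℕ) (lam' a b : Fin (m+1) → ℂ) (ann : ℂ)
    (lamn : Fin (m+2) → ℂ)
    (hlamn : ∀ x : ℂ,
      (arrowhead m lam' a b ann - x • (1 : Matrix (Fin (m+2)) (Fin (m+2)) ℂ)).det
        = ∏ i, (lamn i - x))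
    (M : ℕ) (j : Fin (m+2))
    (hne : ∀ k : Fin (m+1), (M : ℂ) - (lamn j - lam' k) / twoPiI ≠ 0) :
    (∏ i, ((M : ℂ) - (lamn j - lamn i) / twoPiI)) /
      (∏ i, ((M : ℂ) - (lamn j - lam' i) / twoPiI)) =
    (M : ℂ) - lamn j / twoPiI + ann / twoPiI
      - ∑ k, (b k / twoPiI) * (1 / ((M : ℂ) - (lamn j - lam' k) / twoPiI)) *
          (a k / twoPiI) := by
  set T := twoPiI
  have hT : T ≠ 0 := twoPiI_ne_zero
  set t := lamn j - M * T
  have hshift : ∀ z, z - t = T * ((M : ℂ) - (lamn j - z) / T) := fun z => by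
    field_simp; ring
  have hcharpoly := hlamn t
  rw [det_arrowhead_sub_smul_one _ _ _ _ _ _ fun k h => hne k <| by
    simpa [← h, hT] using (hshift (lam' k)).symm] at hcharpoly
  simp only [hshift, prod_mul_distrib, prod_const, card_univ, Fintype.card_fin] at hcharpoly
  have hsum : ∑ k, b k * a k / (T * ((M : ℂ) - (lamn j - lam' k) / T))
      = T * ∑ k, (b k / T) * (1 / ((M : ℂ) - (lamn j - lam' k) / T)) * (a k / T) := by
    rw [mul_sum]
    refine sum_congr rfl fun k _ => ?_
    field_simp
  rw [div_eq_iff (prod_ne_zero_iff.2 fun k _ => hne k)]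
  apply mul_left_cancel₀ (pow_ne_zero (m + 2) hT)
  rw [← hcharpoly, hsum]
  field_simp
  ring

/-- the rational identity (Lemma `ciq`) for an arrowhead matrix. -/
theorem stmt3 (m : ℕ) (lam' a b : Fin (m+1) → ℂ) (ann : ℂ)
    (lamn : Fin (m+2) → ℂ)
    (hlamn : ∀ x : ℂ,
      (arrowhead m lam' a b ann - x • (1 : Matrix (Fin (m+2)) (Fin (m+2)) ℂ)).det
        = ∏ i, (lamn i - x))
    (M : ℕ) (hM : 0 < M) (j : Fin (m+2))
    (hne : ∀ k : Fin (m+1), (M : ℂ) - (lamn j - lam' k) / twoPiI ≠ 0) :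
    (∏ i, ((M : ℂ) - (lamn j - lamn i) / twoPiI)) /
      (∏ i, ((M : ℂ) - (lamn j - lam' i) / twoPiI)) =
    (M : ℂ) - lamn j / twoPiI + ann / twoPiI
      - ∑ k, (b k / twoPiI) * (1 / ((M : ℂ) - (lamn j - lam' k) / twoPiI)) *
          (a k / twoPiI) :=
  stmt3_general m lam' a b ann lamn hlamn M j hne
end
end
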